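/- Let S be a finite set of N > d points of ℝ^d in general position and let q ∈ {-1,+1}^N be realizable by an affine classifier on S. Then there exists a subset S_h ⊂ S of size d and a hyperplane through the points of S_h such that every labeling of S that agrees with q on S \ S_h is obtained from the hyperplane's sign classification by assigning arbitrary signs to the points of S_h; in particular there are at most 2^d realizable labelings agreeing with q on S \ S_h. -/

import Mathlib

/-!
Start from a nonzero affine functional `v` realizing `q`; by general position it vanishes on at
most `d` points. While it vanishes on fewer, the functionals vanishing on its zero set form a
space of dimension at least two, so there is such a `w` not proportional to `v`. Moving along
`v + t • w`, with `|t|` the first value at which another point becomes a zero, no point changes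
sign. After at most `d` moves the zero set has exactly `d` points, and a labeling that is fixed
off `d` points and takes values in `{1, -1}` has at most `2 ^ d` choices.
-/

open Classical in
/-- sign function: 1 if u ≥ 0, -1 otherwise. -/
noncomputable def sgnR (u : ℝ) : ℤ := if 0 ≤ u then 1 else -1

open Finset Module

theorem ncard_le_card_pow_of_eq_off {ι α : Type*} {s : Set (ι → α)} {A : Finset α}
    {T : Finset ι} {q : ι → α} (hA : ∀ f ∈ s, ∀ i, f i ∈ A)
    (hq : ∀ f ∈ s, ∀ i ∉ T, f i = q i) :
    s.ncard ≤ #A ^ #T := by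
  classical
  let extend : (T → A) → ι → α := fun g i => if hi : i ∈ T then g ⟨i, hi⟩ else q i
  have hs : s ⊆ extend '' Set.univ := by
    intro f hf
    refine ⟨fun i => ⟨f i, hA f hf i⟩, trivial, funext fun i => ?_⟩
    by_cases hi : i ∈ T
    · simp [extend, hi]
    · simp [extend, hi, hq f hf i hi]
  calc s.ncard ≤ (extend '' Set.univ).ncard := Set.ncard_le_ncard hs (Set.toFinite _)
    _ ≤ (Set.univ : Set (T → A)).ncard := Set.ncard_image_le
    _ = #A ^ #T := by simp [Set.ncard_univ]

theorem sign_add_eq_sign_of_abs_le {K : Type*} [AddCommGroup K] [LinearOrder K]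
    [IsOrderedAddMonoid K] {a c : K} (hc : |c| ≤ |a|) (hne : a + c ≠ 0) :
    SignType.sign (a + c) = SignType.sign a := by
  obtain ⟨hlo, hhi⟩ := abs_le.mp hc
  rcases lt_trichotomy a 0 with ha | rfl | ha
  · rw [abs_of_neg ha] at hhi
    rw [sign_neg ha, sign_neg (lt_of_le_of_ne (le_neg_iff_add_nonpos_left.mp hhi) hne)]
  · simp_all
  · rw [abs_of_pos ha] at hlo
    rw [sign_pos ha, sign_pos (lt_of_le_of_ne (neg_le_iff_add_nonneg'.mp hlo) hne.symm)]

theorem exists_forall_eq_zero_notMem_span {K V ι : Type*} [Field K] [AddCommGroup V] [Module K V]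
    [FiniteDimensional K V] (φ : ι → Dual K V) (s : Finset ι) (hs : #s + 1 < finrank K V)
    (v : V) : ∃ w, (∀ i ∈ s, φ i w = 0) ∧ w ∉ K ∙ v := by
  let Ψ : V →ₗ[K] (s → K) := LinearMap.pi fun i => φ i
  have hrange : finrank K (LinearMap.range Ψ) ≤ #s := (Submodule.finrank_le _).trans (by simp)
  have hspan : finrank K (K ∙ v) ≤ 1 := (finrank_span_le_card _).trans (by simp)
  have hker : ¬LinearMap.ker Ψ ≤ K ∙ v := fun hle => by
    have := Submodule.finrank_mono hle
    have := Ψ.finrank_range_add_finrank_ker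
    omega
  obtain ⟨w, hw, hwv⟩ := SetLike.not_le_iff_exists.mp hker
  exact ⟨w, fun i hi => congrFun (LinearMap.mem_ker.mp hw) ⟨i, hi⟩, hwv⟩

section LinearOrderedField

variable {K : Type*} [Field K] [LinearOrder K] [IsStrictOrderedRing K]

theorem exists_smallest_root {ι : Type*} [Fintype ι] (F G : ι → K) (hG : ∃ i, G i ≠ 0) :
    ∃ t, (∃ i, G i ≠ 0 ∧ F i + t * G i = 0) ∧ ∀ j, |t * G j| ≤ |F j| := by
  obtain ⟨i, hi, hmin⟩ := ({i | G i ≠ 0} : Finset ι).exists_min_image (fun i => |F i / G i|)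
    (by simpa [filter_nonempty_iff] using hG)
  rw [mem_filter_univ] at hi
  refine ⟨-(F i / G i), ⟨i, hi, by field_simp; ring⟩, fun j => ?_⟩
  by_cases hj : G j = 0
  · simp [hj]
  · calc |-(F i / G i) * G j| = |F i / G i| * |G j| := by rw [abs_mul, abs_neg]
      _ ≤ |F j / G j| * |G j| :=
        mul_le_mul_of_nonneg_right (hmin j (by simpa using hj)) (abs_nonneg _)
      _ = |F j| := by rw [abs_div, div_mul_cancel₀ _ (abs_ne_zero.mpr hj)]

variable {V ι : Type*} [AddCommGroup V] [Module K V] [Fintype ι]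

def zeroSet (φ : ι → Dual K V) (v : V) : Finset ι := {i | φ i v = 0}

variable [FiniteDimensional K V] (φ : ι → Dual K V) {d : ℕ}

theorem exists_zeroSet_ssubset (hN : d < Fintype.card ι) (hV : finrank K V = d + 1)
    (hgen : ∀ v ≠ 0, #(zeroSet φ v) ≤ d) {v : V} (hlt : #(zeroSet φ v) < d) :
    ∃ v' ≠ 0, zeroSet φ v ⊂ zeroSet φ v' ∧
      ∀ i ∉ zeroSet φ v', SignType.sign (φ i v') = SignType.sign (φ i v) := by
  obtain ⟨w, hwZ, hwv⟩ := exists_forall_eq_zero_notMem_span φ (zeroSet φ v) (by omega) v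
  have hw : ∃ i, φ i w ≠ 0 := by
    by_contra! hw
    have hZ : zeroSet φ w = univ := by ext; simp [zeroSet, hw]
    have := hgen w (by rintro rfl; exact hwv (zero_mem _))
    rw [hZ, card_univ] at this
    omega
  obtain ⟨t, ⟨i₀, hi₀, hroot⟩, hsmall⟩ :=
    exists_smallest_root (fun i => φ i v) (fun i => φ i w) hw
  have hφ : ∀ i, φ i (v + t • w) = φ i v + t * φ i w := by simp
  have hi₀v : i₀ ∉ zeroSet φ v := fun h => hi₀ (hwZ i₀ (by simpa using h))
  refine ⟨v + t • w, fun h0 => hwv ?_, ?_, fun i hi => ?_⟩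
  · have ht : t ≠ 0 := by
      rintro rfl
      exact hi₀v (by simpa [zeroSet] using hroot)
    have hv : -v = t • w := add_eq_zero_iff_neg_eq.mp h0
    exact Submodule.mem_span_singleton.mpr
      ⟨-t⁻¹, by rw [neg_smul, ← smul_neg, hv, inv_smul_smul₀ ht]⟩
  · have hsub : zeroSet φ v ⊆ zeroSet φ (v + t • w) := fun i hi => by
      simp only [zeroSet, mem_filter_univ, hφ] at hi ⊢
      rw [hi, hwZ i (by simpa [zeroSet] using hi), mul_zero, add_zero]
    exact (ssubset_iff_of_subset hsub).mpr ⟨i₀, by simpa [zeroSet, hφ] using hroot, hi₀v⟩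
  · rw [hφ]
    exact sign_add_eq_sign_of_abs_le (hsmall i) (by simpa [zeroSet, hφ] using hi)

theorem exists_zeroSet_card_eq (hN : d < Fintype.card ι) (hV : finrank K V = d + 1)
    (hgen : ∀ v ≠ 0, #(zeroSet φ v) ≤ d) {v : V} (hv : v ≠ 0) :
    ∃ w, #(zeroSet φ w) = d ∧
      ∀ i ∉ zeroSet φ w, SignType.sign (φ i w) = SignType.sign (φ i v) := by
  rcases (hgen v hv).lt_or_eq with hlt | heq
  · obtain ⟨v', hv', hss, hsign⟩ := exists_zeroSet_ssubset φ hN hV hgen hlt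
    have hgrow := card_lt_card hss
    have hv'_le := hgen v' hv'
    obtain ⟨w, hcard, hsign'⟩ := exists_zeroSet_card_eq hN hV hgen hv'
    refine ⟨w, hcard, fun i hi => (hsign' i hi).trans (hsign i fun hi' => hi ?_)⟩
    have : SignType.sign (φ i w) = 0 := by
      rw [hsign' i hi, (by simpa [zeroSet] using hi' : φ i v' = 0), sign_zero]
    simpa [zeroSet] using this
  · exact ⟨v, heq, fun _ _ => rfl⟩
termination_by d - #(zeroSet φ v)

end LinearOrderedField

theorem sgnR_eq_of_sign_eq {a b : ℝ} (h : SignType.sign a = SignType.sign b) :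
    sgnR a = sgnR b := by
  simp only [sgnR, ← sign_nonneg_iff (a := a), ← sign_nonneg_iff (a := b), h]

theorem sgnR_mem (u : ℝ) : sgnR u ∈ ({1, -1} : Finset ℤ) := by
  unfold sgnR
  split_ifs <;> simp

section AffineClassifier

variable {d N : ℕ} (x : Fin N → Fin d → ℝ)

noncomputable def affineEval (i : Fin N) : Dual ℝ ((Fin d → ℝ) × ℝ) :=
  (Fintype.linearCombination ℝ (x i)).coprod LinearMap.id

theorem affineEval_apply (i : Fin N) (p : (Fin d → ℝ) × ℝ) :
    affineEval x i p = ∑ j, p.1 j * x i j + p.2 := by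
  simp [affineEval, Fintype.linearCombination_apply]

theorem card_zeroSet_affineEval_le
    (hgen : ∀ (h : Fin d → ℝ) (b : ℝ), h ≠ 0 →
      Set.ncard {i : Fin N | (∑ j, h j * x i j) + b = 0} ≤ d)
    {p : (Fin d → ℝ) × ℝ} (hp : p ≠ 0) : #(zeroSet (affineEval x) p) ≤ d := by
  obtain ⟨h, b⟩ := p
  by_cases hh : h = 0
  · subst hh
    have hb : b ≠ 0 := fun hb => hp (by simp [hb])
    simp [zeroSet, affineEval_apply, hb]
  · convert hgen h b hh using 1
    rw [← Set.ncard_coe_finset]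
    congr 1
    ext i
    simp [zeroSet, affineEval_apply]

theorem exists_ne_zero_sgnR_eq {q : Fin N → ℤ}
    (hq : ∃ (h : Fin d → ℝ) (b : ℝ), ∀ i, q i = sgnR ((∑ j, h j * x i j) + b)) :
    ∃ p ≠ 0, ∀ i, q i = sgnR (affineEval x i p) := by
  obtain ⟨h, b, hqhb⟩ := hq
  by_cases hp : (h, b) = 0
  · obtain ⟨rfl, rfl⟩ := Prod.ext_iff.mp hp
    exact ⟨(0, 1), by simp, fun i => by simp [hqhb, affineEval_apply, sgnR]⟩
  · exact ⟨(h, b), hp, fun i => by simpa [affineEval_apply] using hqhb i⟩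

end AffineClassifier

/-- For any realizable labeling q of N > d points in general position, there
is a d-point subset S_h and a hyperplane through S_h whose sign classification agrees with
q outside S_h; in particular at most 2^d realizable labelings agree with q outside S_h. -/
theorem stmt12 (d N : ℕ) (hdN : d < N) (x : Fin N → (Fin d → ℝ))
    (hgen : ∀ (h : Fin d → ℝ) (b : ℝ), h ≠ 0 →
      Set.ncard {i : Fin N | (∑ j, h j * x i j) + b = 0} ≤ d)
    (q : Fin N → ℤ)
    (hq : ∃ (h : Fin d → ℝ) (b : ℝ), ∀ i, q i = sgnR ((∑ j, h j * x i j) + b)) :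
    ∃ T : Finset (Fin N), T.card = d ∧
      ∃ (h' : Fin d → ℝ) (b' : ℝ),
        (∀ i ∈ T, (∑ j, h' j * x i j) + b' = 0) ∧
        (∀ i ∉ T, q i = sgnR ((∑ j, h' j * x i j) + b')) ∧
        Set.ncard {q' : Fin N → ℤ |
            (∃ (h : Fin d → ℝ) (b : ℝ), ∀ i, q' i = sgnR ((∑ j, h j * x i j) + b)) ∧
            ∀ i ∉ T, q' i = q i} ≤ 2 ^ d := by
  obtain ⟨p, hp, hqp⟩ := exists_ne_zero_sgnR_eq x hq
  obtain ⟨w, hcard, hsign⟩ := exists_zeroSet_card_eq (affineEval x) (by simpa using hdN)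
    (by simp) (fun _ hv => card_zeroSet_affineEval_le x hgen hv) hp
  refine ⟨zeroSet (affineEval x) w, hcard, w.1, w.2, fun i hi => ?_, fun i hi => ?_, ?_⟩
  · simpa [zeroSet, affineEval_apply] using hi
  · rw [hqp, ← affineEval_apply]
    exact sgnR_eq_of_sign_eq (hsign i hi).symm
  · refine (ncard_le_card_pow_of_eq_off (A := {1, -1}) ?_ fun _ hq' => hq'.2).trans_eq ?_
    · rintro _ ⟨⟨h, b, hr⟩, -⟩ i
      rw [hr i]
      exact sgnR_mem _
    · simp [hcard]
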